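/- Given a constraint A'_i · x = b'_i (a row of a simplex tableau) where x is a nonnegative integer vector, the Gomory cut (−A'_i + ⌊A'_i⌋)·x ≤ −b'_i + ⌊b'_i⌋ is valid: every nonnegative integer vector x satisfying A'_i · x = b'_i satisfies the cut. -/
import Mathlib


/-- Validity of the Gomory cut derived from a simplex tableau row. -/
theorem gomory_cut_valid {n : ℕ} (A : Fin n → ℝ) (b : ℝ)
    (x : Fin n → ℤ) (hx : ∀ j, 0 ≤ x j)
    (hrow : ∑ j, A j * (x j : ℝ) = b) :
    ∑ j, (-A j + ⌊A j⌋) * (x j : ℝ) ≤ -b + ⌊b⌋ := by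
  set m : ℤ := ∑ j, ⌊A j⌋ * x j with hm
  have hmb : (m : ℝ) ≤ b := by
    rw [← hrow]
    push_cast [hm]
    apply Finset.sum_le_sum
    intro j _
    have h1 : (⌊A j⌋ : ℝ) ≤ A j := Int.floor_le _
    have h2 : (0 : ℝ) ≤ (x j : ℝ) := by exact_mod_cast hx j
    exact mul_le_mul_of_nonneg_right h1 h2
  have hfl : m ≤ ⌊b⌋ := Int.le_floor.mpr hmb
  have key : ∑ j, (-A j + ⌊A j⌋) * (x j : ℝ) = -b + m := by
    rw [← hrow]
    push_cast [hm]
    rw [← Finset.sum_neg_distrib, ← Finset.sum_add_distrib]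
    congr 1; ext j; ring
  rw [key]
  have : (m : ℝ) ≤ (⌊b⌋ : ℝ) := by exact_mod_cast hfl
  linarith
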